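/- In the Boolean semantics of the diagrammatic calculus, the bialgebra-type equality holds: the relation {((x₁,x₂),(y₁,y₂)) ∈ B⁴ | x₁ ∧ x₂ ≤ y₁ ∧ y₂} equals the relational composite of {((x₁,x₂),(z₁,z₂,z₃,z₄)) | x₁ ≤ z₁ ∧ z₂, x₂ ≤ z₃ ∧ z₄} followed by (reindexing the middle wires) {((z₁,z₃,z₂,z₄),(y₁,y₂)) | z₁ ∧ z₃ ≤ y₁, z₂ ∧ z₄ ≤ y₂}. -/
import Mathlib

theorem bialgebra_semantics :
    {p : (Bool × Bool) × (Bool × Bool) | p.1.1 ⊓ p.1.2 ≤ p.2.1 ⊓ p.2.2} =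
    {p : (Bool × Bool) × (Bool × Bool) |
      ∃ z₁ z₂ z₃ z₄ : Bool,
        (p.1.1 ≤ z₁ ⊓ z₂ ∧ p.1.2 ≤ z₃ ⊓ z₄) ∧
        (z₁ ⊓ z₃ ≤ p.2.1 ∧ z₂ ⊓ z₄ ≤ p.2.2)} := by
  ext ⟨⟨a, b⟩, ⟨c, d⟩⟩
  simp only [Set.mem_setOf_eq]
  constructor
  · intro h
    exact ⟨a, a, b, b, ⟨le_inf le_rfl le_rfl, le_inf le_rfl le_rfl⟩, le_trans h inf_le_left, le_trans h inf_le_right⟩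
  · rintro ⟨z₁, z₂, z₃, z₄, ⟨h1, h2⟩, h3, h4⟩
    exact le_inf (le_trans (inf_le_inf (le_trans h1 inf_le_left) (le_trans h2 inf_le_left)) h3)
      (le_trans (inf_le_inf (le_trans h1 inf_le_right) (le_trans h2 inf_le_right)) h4)
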